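/- arXiv:1606.00629 — 5 statements merged into one kernel-verified Lean document; each statement's English description precedes it below -/
import Mathlib

section
/- The number of T-decodable elements s ∈ GF(q^m)^{n-k} is at most 𝓔(T) · q^{r d (n-k)}, where 𝓔(T) denotes the number of GF(q)-subspaces of GF(q^m) of dimension r containing T. -/
/-- An element `s ∈ K^ν` (where `K` plays the role of `GF(q^m)` over `Fq = GF(q)`) is
`T`-decodable (with respect to the subspace `Fsp` of dimension `d`, its linearly independent
elements `F₁, F₂`, and the target dimension `r`) if there exists an `Fq`-subspace `E` of `K`
of dimension `r` such that:
(i) `dim⟨Fsp·E⟩ = d·r`;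
(ii) `dim(F₁⁻¹⟨Fsp·E⟩ ∩ F₂⁻¹⟨Fsp·E⟩) = r`;
(iii) all coordinates of `s` belong to `⟨Fsp·E⟩` and, together with the elements of
`⟨Fsp·T⟩`, they generate `⟨Fsp·E⟩`. -/
def TDecodable {Fq K : Type} [Field Fq] [Field K] [Algebra Fq K]
    (Fsp T : Submodule Fq K) (F₁ F₂ : K) (d r : ℕ) {ν : ℕ} (s : Fin ν → K) : Prop :=
  ∃ E : Submodule Fq K,
    Module.finrank Fq ↥E = r ∧
    Module.finrank Fq ↥(Fsp * E) = d * r ∧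
    Module.finrank Fq ↥((Fsp * E).map (LinearMap.mulLeft Fq F₁⁻¹) ⊓
      (Fsp * E).map (LinearMap.mulLeft Fq F₂⁻¹)) = r ∧
    (∀ i, s i ∈ Fsp * E) ∧
    (Fsp * T) ⊔ Submodule.span Fq (Set.range s) = Fsp * E

/-- The number of `T`-decodable elements `s ∈ GF(q^m)^{n-k}` is at most
`𝓔(T) · q^{r·d·(n-k)}`, where `𝓔(T)` is the number of subspaces of dimension `r`
containing `T`. -/
theorem TDecodable_count_upper_bound
    (q m n k d t r : ℕ) (hm : 0 < m) (hnk : k < n)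
    (Fq K : Type) [Field Fq] [Fintype Fq] [Field K] [Algebra Fq K]
    (hq : Fintype.card Fq = q) (hK : Module.finrank Fq K = m)
    (Fsp T : Submodule Fq K)
    (hF : Module.finrank Fq ↥Fsp = d) (hT : Module.finrank Fq ↥T = t)
    (F₁ F₂ : K) (hF₁ : F₁ ∈ Fsp) (hF₂ : F₂ ∈ Fsp)
    (hind : LinearIndependent Fq ![F₁, F₂])
    (htr : t ≤ r) (hrm : r ≤ m) :
    Nat.card {s : Fin (n - k) → K // TDecodable Fsp T F₁ F₂ d r s} ≤
      Nat.card {E : Submodule Fq K // T ≤ E ∧ Module.finrank Fq ↥E = r} *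
        q ^ (r * d * (n - k)) := by
  classical
  set ν := n - k with hν
  have hfd : FiniteDimensional Fq K :=
    Module.finite_of_finrank_pos (by rw [hK]; exact hm)
  have hKfin : Finite K := Module.finite_of_finite Fq
  have hF₁0 : F₁ ≠ 0 := by
    have := hind.ne_zero 0
    simpa using this
  have hF₂0 : F₂ ≠ 0 := by
    have := hind.ne_zero 1
    simpa using this
  -- For each decodable s, produce a good subspace E
  have key : ∀ s : Fin ν → K, TDecodable Fsp T F₁ F₂ d r s →
      ∃ E : Submodule Fq K, (T ≤ E ∧ Module.finrank Fq ↥E = r) ∧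
        Module.finrank Fq ↥(Fsp * E) = d * r ∧ (∀ i, s i ∈ Fsp * E) := by
    intro s hs
    obtain ⟨E, hE1, hE2, hE3, hE4, hE5⟩ := hs
    set M := Fsp * E with hM
    have hFT : Fsp * T ≤ M := hE5 ▸ le_sup_left
    set E' : Submodule Fq K := M.map (LinearMap.mulLeft Fq F₁⁻¹) ⊓
      M.map (LinearMap.mulLeft Fq F₂⁻¹) with hE'
    have hTle : T ≤ E' := by
      intro x hx
      constructor
      · exact ⟨F₁ * x, hFT (Submodule.mul_mem_mul hF₁ hx), by
          simp [LinearMap.mulLeft_apply, inv_mul_cancel_left₀ hF₁0]⟩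
      · exact ⟨F₂ * x, hFT (Submodule.mul_mem_mul hF₂ hx), by
          simp [LinearMap.mulLeft_apply, inv_mul_cancel_left₀ hF₂0]⟩
    have hEle : E ≤ E' := by
      intro x hx
      constructor
      · exact ⟨F₁ * x, Submodule.mul_mem_mul hF₁ hx, by
          simp [LinearMap.mulLeft_apply, inv_mul_cancel_left₀ hF₁0]⟩
      · exact ⟨F₂ * x, Submodule.mul_mem_mul hF₂ hx, by
          simp [LinearMap.mulLeft_apply, inv_mul_cancel_left₀ hF₂0]⟩
    have hEE' : E = E' := Submodule.eq_of_le_of_finrank_eq hEle (by rw [hE1, hE3])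
    exact ⟨E', ⟨hTle, hE3⟩, by rw [← hEE']; exact ⟨hE2, hE4⟩⟩
  set 𝓔 := {E : Submodule Fq K // T ≤ E ∧ Module.finrank Fq ↥E = r} with h𝓔
  have hsubfin : Finite (Submodule Fq K) :=
    Finite.of_injective (fun E : Submodule Fq K => (E : Set K)) SetLike.coe_injective
  set N := q ^ (r * d * ν) with hN
  set Fib : 𝓔 → Type := fun E =>
      {v : Fin ν → ↥(Fsp * E.1) // Module.finrank Fq ↥(Fsp * E.1) = d * r} with hFib
  have hFibcard : ∀ E : 𝓔, Nat.card (Fib E) ≤ N := by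
    intro E
    by_cases h : Module.finrank Fq ↥(Fsp * E.1) = d * r
    · have h1 : Nat.card (Fib E) ≤ Nat.card (Fin ν → ↥(Fsp * E.1)) := by
        exact Nat.card_le_card_of_injective (fun v => v.1) (fun a b hab => Subtype.ext hab)
      have h2 : Nat.card ↥(Fsp * E.1) = q ^ (d * r) := by
        have : Fintype ↥(Fsp * E.1) := Fintype.ofFinite _
        rw [Nat.card_eq_fintype_card, Module.card_eq_pow_finrank (K := Fq), hq, h]
      calc Nat.card (Fib E) ≤ Nat.card (Fin ν → ↥(Fsp * E.1)) := h1
        _ = (q ^ (d * r)) ^ ν := by rw [Nat.card_fun, h2, Nat.card_eq_fintype_card, Fintype.card_fin]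
        _ = N := by rw [hN, ← pow_mul]; ring_nf
    · have : IsEmpty (Fib E) := ⟨fun v => h v.2⟩
      simp [Nat.card_of_isEmpty]
  -- embedding from decodables into the sigma type
  set f : {s : Fin ν → K // TDecodable Fsp T F₁ F₂ d r s} → Σ E : 𝓔, Fib E := fun s =>
    ⟨⟨(key s.1 s.2).choose, (key s.1 s.2).choose_spec.1⟩,
      ⟨fun i => ⟨s.1 i, (key s.1 s.2).choose_spec.2.2 i⟩, (key s.1 s.2).choose_spec.2.1⟩⟩ with hf
  have hfinj : Function.Injective f := by
    intro s₁ s₂ hss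
    have : (fun i => ((f s₁).2.1 i : K)) = (fun i => ((f s₂).2.1 i : K)) := by rw [hss]
    exact Subtype.ext (funext fun i => congrFun this i)
  -- embedding from the sigma type into 𝓔 × Fin N
  have hembi : ∀ E : 𝓔, Nonempty (Fib E ↪ Fin N) := by
    intro E
    have : Fintype (Fib E) := Fintype.ofFinite _
    apply Function.Embedding.nonempty_of_card_le
    rw [Fintype.card_fin, ← Nat.card_eq_fintype_card]
    exact hFibcard E
  have emb : ∀ E : 𝓔, Fib E ↪ Fin N := fun E => (hembi E).some
  set g : (Σ E : 𝓔, Fib E) → 𝓔 × Fin N := fun p => (p.1, emb p.1 p.2) with hg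
  have hginj : Function.Injective g := by
    rintro ⟨E₁, v₁⟩ ⟨E₂, v₂⟩ hpq
    have h1 : E₁ = E₂ := congrArg Prod.fst hpq
    subst h1
    have h2 : emb E₁ v₁ = emb E₁ v₂ := congrArg Prod.snd hpq
    exact Sigma.ext rfl (heq_of_eq ((emb E₁).injective h2))
  calc Nat.card {s : Fin ν → K // TDecodable Fsp T F₁ F₂ d r s}
      ≤ Nat.card (Σ E : 𝓔, Fib E) := Nat.card_le_card_of_injective f hfinj
    _ ≤ Nat.card (𝓔 × Fin N) := Nat.card_le_card_of_injective g hginj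
    _ = Nat.card 𝓔 * N := by
        rw [Nat.card_prod]; simp
    _ = Nat.card 𝓔 * q ^ (r * d * ν) := rfl
end

section
/- Let A be a GF(q)-subspace of GF(q^m) of dimension α and let T be a GF(q)-subspace of dimension t (possibly t = 0) such that dim⟨AT⟩ = α·t. Let β be a nonnegative integer with α(t + β) ≤ m. Then the number of β-tuples (b₁, …, b_β) ∈ (GF(q^m))^β such that, setting B = T + span_{GF(q)}{b₁, …, b_β}, one has dim⟨AB⟩ < α(t + β), is at most q^{mβ} · q^{α(t+β)} / ((q - 1) q^m). -/
/-!
Call `b` deficient for `(A, T)` when `dim⟨A(T + ⟨b⟩)⟩ < dim⟨AT⟩ + α`, where `α = dim A`.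
By the dimension formula this forces `⟨AT⟩ ∩ bA ≠ 0`, i.e. `ab ∈ ⟨AT⟩` for some nonzero `a ∈ A`;
since `(u, b) ↦ (ua, uab)` embeds `GF(q)ˣ × {deficient b}` into `(A ∖ 0) × ⟨AT⟩`, there are at
most `(q^α - 1) q^{dim⟨AT⟩} / (q - 1)` deficient vectors.

A tuple `(b₀, b₁, …, b_β)` can only be deficient if `b₀` is, or if `b₀` is not, so that
`dim⟨A(T + ⟨b₀⟩)⟩ = dim⟨AT⟩ + α`, and `(b₁, …, b_β)` is deficient for `(A, T + ⟨b₀⟩)`.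
Induction on `β` then gives
`(q - 1) q^m · #{deficient β-tuples} ≤ q^{mβ} (q^{dim⟨AT⟩ + αβ} - q^{dim⟨AT⟩})`.
-/

open Module Submodule

theorem Nat.card_subtype_ne_zero (M : Type*) [Zero M] [Finite M] :
    Nat.card {x : M // x ≠ 0} = Nat.card M - 1 := by
  classical
  have := Fintype.ofFinite M
  simp [Nat.card_eq_fintype_card, Fintype.card_subtype_compl]

theorem Nat.card_subtype_eq_sum_card_cons {α : Type*} [Fintype α] {n : ℕ}
    (P : (Fin (n + 1) → α) → Prop) :
    Nat.card {b // P b} = ∑ a, Nat.card {v : Fin n → α // P (Fin.cons a v)} := by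
  rw [← Nat.card_sigma,
    ← Nat.card_congr (Equiv.subtypeProdEquivSigmaSubtype fun a v ↦ P (Fin.cons a v))]
  exact Nat.card_congr ((Fin.consEquiv fun _ ↦ α).subtypeEquiv fun _ ↦ Iff.rfl).symm

namespace Submodule

variable {F K : Type*} [Field F] [CommRing K] [Algebra F K]

def deficientVectors (A T : Submodule F K) : Set K :=
  {b | finrank F (A * (T ⊔ span F {b})) < finrank F (A * T) + finrank F A}

def deficientTuples (A T : Submodule F K) (β : ℕ) : Set (Fin β → K) :=
  {b | finrank F (A * (T ⊔ span F (Set.range b))) < finrank F (A * T) + β * finrank F A}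

theorem deficientTuples_zero (A T : Submodule F K) : deficientTuples A T 0 = ∅ :=
  Set.eq_empty_of_forall_notMem fun b hb ↦ by
    rw [deficientTuples, Set.mem_ofPred_eq, Set.range_eq_empty, span_empty, sup_bot_eq] at hb
    omega

theorem mul_span_singleton_eq_map (A : Submodule F K) (b : K) :
    A * span F {b} = A.map (LinearMap.mulRight F b) := by
  ext x
  simp [mem_mul_span_singleton]

theorem finrank_mul_span_singleton [IsDomain K] (A : Submodule F K) {b : K} (hb : b ≠ 0) :
    finrank F (A * span F {b}) = finrank F A := by
  rw [mul_span_singleton_eq_map]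
  exact (equivMapOfInjective _ (mul_left_injective₀ hb) A).finrank_eq.symm

variable [Module.Finite F K]

theorem finrank_mul_span_singleton_le (A : Submodule F K) (b : K) :
    finrank F (A * span F {b}) ≤ finrank F A := by
  rw [mul_span_singleton_eq_map]
  exact finrank_map_le _ _

theorem finrank_mul_sup_span_singleton_le (A T : Submodule F K) (b : K) :
    finrank F (A * (T ⊔ span F {b})) ≤ finrank F (A * T) + finrank F A := by
  rw [mul_sup]
  exact (finrank_add_le_finrank_add_finrank _ _).trans
    (Nat.add_le_add_left (finrank_mul_span_singleton_le A b) _)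

theorem finrank_mul_sup_span_singleton_of_notMem {A T : Submodule F K} {b : K}
    (hb : b ∉ deficientVectors A T) :
    finrank F (A * (T ⊔ span F {b})) = finrank F (A * T) + finrank F A :=
  (finrank_mul_sup_span_singleton_le A T b).antisymm (not_lt.1 hb)

theorem cons_mem_deficientTuples_iff {A T : Submodule F K} {b₀ : K}
    (hb₀ : b₀ ∉ deficientVectors A T) {β : ℕ} (v : Fin β → K) :
    Fin.cons b₀ v ∈ deficientTuples A T (β + 1) ↔ v ∈ deficientTuples A (T ⊔ span F {b₀}) β := by
  have hspan : T ⊔ span F (Set.range (Fin.cons b₀ v : Fin (β + 1) → K)) =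
      T ⊔ span F {b₀} ⊔ span F (Set.range v) := by
    rw [Fin.range_cons, span_insert, sup_assoc]
  simp only [deficientTuples, Set.mem_ofPred_eq]
  rw [hspan, finrank_mul_sup_span_singleton_of_notMem hb₀, Nat.succ_mul]
  omega

theorem card_deficientTuples_succ_le [Finite F] {A T : Submodule F K} {β : ℕ} {X : ℚ}
    (hX : 0 ≤ X) (h : ∀ b₀ ∉ deficientVectors A T,
      (Nat.card (deficientTuples A (T ⊔ span F {b₀}) β) : ℚ) ≤ X) :
    (Nat.card (deficientTuples A T (β + 1)) : ℚ) ≤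
      Nat.card (deficientVectors A T) * (Nat.card F : ℚ) ^ (finrank F K * β) +
        (Nat.card F : ℚ) ^ finrank F K * X := by
  classical
  have : Finite K := Module.finite_of_finite F
  have := Fintype.ofFinite K
  have hK : Nat.card K = Nat.card F ^ finrank F K := natCard_eq_pow_finrank
  rw [Set.Elem, Nat.card_subtype_eq_sum_card_cons, ← Finset.sum_filter_add_sum_filter_not
    Finset.univ (· ∈ deficientVectors A T), Nat.cast_add]
  gcongr
  · have htuples : Nat.card (Fin β → K) = Nat.card F ^ (finrank F K * β) := by
      rw [Nat.card_fun, Nat.card_fin, hK, pow_mul]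
    have hfibre : ∀ b₀ ∈ Finset.univ.filter (· ∈ deficientVectors A T),
        Nat.card {v : Fin β → K // Fin.cons b₀ v ∈ deficientTuples A T (β + 1)} ≤
          Nat.card F ^ (finrank F K * β) := fun _ _ ↦ htuples ▸ Finite.card_subtype_le _
    have := Finset.sum_le_card_nsmul _ _ _ hfibre
    rw [smul_eq_mul, ← Fintype.card_subtype, ← Nat.card_eq_fintype_card] at this
    exact_mod_cast this
  · calc _ ≤ ∑ _b₀ ∈ Finset.univ.filter (· ∉ deficientVectors A T), X := by
          push_cast
          refine Finset.sum_le_sum fun b₀ hb₀ ↦ ?_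
          have hb₀ := (Finset.mem_filter.1 hb₀).2
          rw [Nat.card_congr (Equiv.subtypeEquivRight (cons_mem_deficientTuples_iff hb₀))]
          exact h b₀ hb₀
      _ = ((Finset.univ.filter (· ∉ deficientVectors A T)).card : ℚ) * X := by
          rw [Finset.sum_const, nsmul_eq_mul]
      _ ≤ (Nat.card F : ℚ) ^ finrank F K * X := by
          gcongr
          exact_mod_cast (Finset.card_filter_le _ _).trans_eq (by rw [Finset.card_univ,
            ← Nat.card_eq_fintype_card, hK])

variable [IsDomain K]

theorem exists_mul_mem_of_mem_deficientVectors {A T : Submodule F K} {b : K}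
    (hb : b ∈ deficientVectors A T) : ∃ a ∈ A, a ≠ 0 ∧ a * b ∈ A * T := by
  rcases eq_or_ne b 0 with rfl | hb₀
  · rw [deficientVectors, Set.mem_ofPred_eq, span_zero_singleton, sup_bot_eq] at hb
    obtain ⟨a, ha, ha₀⟩ := exists_mem_ne_zero_of_ne_bot (show A ≠ ⊥ by rintro rfl; simp at hb)
    exact ⟨a, ha, ha₀, by simp⟩
  · rw [deficientVectors, Set.mem_ofPred_eq, mul_sup] at hb
    have hdim := finrank_sup_add_finrank_inf_eq (A * T) (A * span F {b})
    rw [finrank_mul_span_singleton A hb₀] at hdim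
    have hinf : A * T ⊓ A * span F {b} ≠ ⊥ := by
      intro h
      rw [h, finrank_bot] at hdim
      omega
    obtain ⟨x, hx, hx₀⟩ := exists_mem_ne_zero_of_ne_bot hinf
    obtain ⟨a, ha, rfl⟩ := mem_mul_span_singleton.1 (mem_inf.1 hx).2
    exact ⟨a, ha, left_ne_zero_of_mul hx₀, (mem_inf.1 hx).1⟩

variable [Finite F]

theorem card_sub_one_mul_card_deficientVectors_le (A T : Submodule F K) :
    (Nat.card F - 1) * Nat.card (deficientVectors A T) ≤
      (Nat.card F ^ finrank F A - 1) * Nat.card F ^ finrank F (A * T) := by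
  choose a ha ha₀ hab using fun b : deficientVectors A T ↦
    exists_mul_mem_of_mem_deficientVectors b.2
  let f : Fˣ × deficientVectors A T → {x : A // x ≠ 0} × (A * T) := fun p ↦
    (⟨⟨(p.1 : F) • a p.2, smul_mem _ _ (ha p.2)⟩, by simpa using ha₀ p.2⟩,
      ⟨(p.1 : F) • (a p.2 * p.2), smul_mem _ _ (hab p.2)⟩)
  have hf : f.Injective := by
    rintro ⟨u, b⟩ ⟨u', b'⟩ h
    simp only [f, Prod.mk.injEq, Subtype.mk.injEq] at h
    obtain ⟨h₁, h₂⟩ := h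
    rw [← smul_mul_assoc, ← smul_mul_assoc, h₁] at h₂
    obtain rfl : b = b' := Subtype.ext (mul_left_cancel₀ (by simpa using ha₀ b') h₂)
    exact Prod.ext (Units.ext (smul_left_injective F (ha₀ b) h₁)) rfl
  have : Finite K := Module.finite_of_finite F
  have := Nat.card_le_card_of_injective f hf
  rwa [Nat.card_prod, Nat.card_prod, Nat.card_units, Nat.card_subtype_ne_zero,
    natCard_eq_pow_finrank (K := F) (V := A), natCard_eq_pow_finrank (K := F) (V := A * T)] at this

theorem card_deficientVectors_le (A T : Submodule F K) :
    ((Nat.card F : ℚ) - 1) * Nat.card (deficientVectors A T) ≤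
      (Nat.card F : ℚ) ^ (finrank F (A * T) + finrank F A) - Nat.card F ^ finrank F (A * T) := by
  have hq : 1 ≤ Nat.card F := Nat.one_le_iff_ne_zero.2 Nat.card_pos.ne'
  have h := card_sub_one_mul_card_deficientVectors_le A T
  rw [← Nat.cast_le (α := ℚ)] at h
  push_cast [Nat.cast_sub hq, Nat.cast_sub (Nat.one_le_pow _ _ hq)] at h
  linarith [pow_add (Nat.card F : ℚ) (finrank F (A * T)) (finrank F A)]

theorem card_deficientTuples_le (A T : Submodule F K) (β : ℕ) :
    ((Nat.card F : ℚ) - 1) * Nat.card F ^ finrank F K * Nat.card (deficientTuples A T β) ≤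
      (Nat.card F : ℚ) ^ (finrank F K * β) *
        (Nat.card F ^ (finrank F (A * T) + β * finrank F A) - Nat.card F ^ finrank F (A * T)) := by
  induction β generalizing T with
  | zero => simp [deficientTuples_zero]
  | succ β ih =>
    set q : ℚ := (Nat.card F : ℚ)
    set m := finrank F K
    set n := finrank F (A * T)
    set α := finrank F A
    have hq : 1 < q := Nat.one_lt_cast.2 Finite.one_lt_card
    have hscale : 0 < (q - 1) * q ^ m := mul_pos (sub_pos.2 hq) (by positivity)
    set G := q ^ (m * β) * (q ^ (n + α + β * α) - q ^ (n + α))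
    have hG : 0 ≤ G :=
      mul_nonneg (by positivity) (sub_nonneg.2 (pow_le_pow_right₀ hq.le (by omega)))
    set X := G / ((q - 1) * q ^ m)
    have hX : 0 ≤ X := div_nonneg hG hscale.le
    have hXG : (q - 1) * q ^ m * X = G := mul_div_cancel₀ _ hscale.ne'
    have hstep := card_deficientTuples_succ_le hX fun b₀ hb₀ ↦ by
      have h := ih (T ⊔ span F {b₀})
      rw [finrank_mul_sup_span_singleton_of_notMem hb₀] at h
      rw [le_div_iff₀ hscale, mul_comm]
      exact h
    calc (q - 1) * q ^ m * Nat.card (deficientTuples A T (β + 1))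
        ≤ (q - 1) * q ^ m * (Nat.card (deficientVectors A T) * q ^ (m * β) + q ^ m * X) := by
          gcongr
      _ = (q - 1) * Nat.card (deficientVectors A T) * (q ^ m * q ^ (m * β)) + q ^ m * G := by
          linear_combination q ^ m * hXG
      _ ≤ (q ^ (n + α) - q ^ n) * (q ^ m * q ^ (m * β)) + q ^ m * G := by
          gcongr
          exact card_deficientVectors_le A T
      _ = q ^ (m * (β + 1)) * (q ^ (n + (β + 1) * α) - q ^ n) := by
          simp only [G]
          rw [mul_add_one, add_one_mul, pow_add, ← add_assoc, add_right_comm n]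
          ring

end Submodule

theorem count_non_full_product_tuples_general
    (q m α t β : ℕ) (hm : 0 < m)
    (Fq K : Type) [Field Fq] [Fintype Fq] [Field K] [Algebra Fq K]
    (hq : Fintype.card Fq = q) (hK : Module.finrank Fq K = m)
    (A T : Submodule Fq K)
    (hA : Module.finrank Fq ↥A = α)
    (hAT : Module.finrank Fq ↥(A * T) = α * t) :
    (Nat.card {b : Fin β → K //
        Module.finrank Fq ↥(A * (T ⊔ Submodule.span Fq (Set.range b))) < α * (t + β)} : ℚ) ≤
      (q : ℚ) ^ (m * β) * (q : ℚ) ^ (α * (t + β)) / (((q : ℚ) - 1) * (q : ℚ) ^ m) := by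
  have : FiniteDimensional Fq K := Module.finite_of_finrank_pos (hK ▸ hm)
  have hq2 : (2 : ℚ) ≤ q := by exact_mod_cast hq ▸ Fintype.one_lt_card
  have hcard : Nat.card {b : Fin β → K //
      finrank Fq ↥(A * (T ⊔ span Fq (Set.range b))) < α * (t + β)} =
      Nat.card (deficientTuples A T β) := by
    rw [deficientTuples, hA, hAT, mul_add, mul_comm β]
    rfl
  have hbound := card_deficientTuples_le A T β
  rw [Nat.card_eq_fintype_card, hq, hK, hA, hAT, mul_comm β, ← mul_add, ← hcard] at hbound
  rw [le_div_iff₀ (mul_pos (by linarith) (by positivity))]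
  have : (0 : ℚ) ≤ q ^ (m * β) * q ^ (α * t) := by positivity
  linarith

/-- counting form of Lemma 2: Let `A` be a `GF(q)`-subspace of `GF(q^m)` of
dimension `α` and `T` a subspace of dimension `t` (possibly `t = 0`) with `dim⟨AT⟩ = α·t`.
Let `β ≥ 0` with `α(t+β) ≤ m`. Then the number of `β`-tuples `(b₁, …, b_β)` such that, setting
`B = T + span{b₁, …, b_β}`, one has `dim⟨AB⟩ < α(t+β)`, is at most
`q^{mβ} · q^{α(t+β)} / ((q-1) q^m)`. -/
theorem count_non_full_product_tuples
    (q m α t β : ℕ) (hm : 0 < m)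
    (Fq K : Type) [Field Fq] [Fintype Fq] [Field K] [Algebra Fq K]
    (hq : Fintype.card Fq = q) (hK : Module.finrank Fq K = m)
    (A T : Submodule Fq K)
    (hA : Module.finrank Fq ↥A = α) (hT : Module.finrank Fq ↥T = t)
    (hAT : Module.finrank Fq ↥(A * T) = α * t)
    (hβ : α * (t + β) ≤ m) :
    (Nat.card {b : Fin β → K //
        Module.finrank Fq ↥(A * (T ⊔ Submodule.span Fq (Set.range b))) < α * (t + β)} : ℚ) ≤
      (q : ℚ) ^ (m * β) * (q : ℚ) ^ (α * (t + β)) / (((q : ℚ) - 1) * (q : ℚ) ^ m) :=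
  count_non_full_product_tuples_general q m α t β hm Fq K hq hK A T hA hAT
end

section
/- Let A be a GF(q)-subspace of GF(q^m) of dimension α ≥ 1 and let B' be a GF(q)-subspace of GF(q^m) such that the product space ⟨AB'⟩ has dimension D. Then the number of elements b ∈ GF(q^m) such that the subspace Ab = {ab : a ∈ A} has a nonzero intersection with ⟨AB'⟩ is at most ((q^α - 1)/(q - 1)) · q^D. -/
/-! Double count the pairs `(b, a)` with `a ∈ A \ {0}` and `b * a ∈ ⟨AB'⟩`. Each such `a` has
exactly `|⟨AB'⟩| = q ^ D` partners `b`, since `b ↦ b * a` is a bijection. If `Ab` meets `⟨AB'⟩`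
nontrivially, say in `b * a₀ ≠ 0`, then `b` has at least the `q - 1` partners `c • a₀`, `c ≠ 0`. -/

open Finset

section Multipliers

open scoped Classical

variable {F K : Type*} [Field F] [Field K] [Algebra F K]

theorem Submodule.exists_ne_zero_mul_mem_of_map_mulLeft_inf_ne_bot {A S : Submodule F K} {b : K}
    (h : A.map (LinearMap.mulLeft F b) ⊓ S ≠ ⊥) : ∃ a ∈ A, a ≠ 0 ∧ b * a ∈ S := by
  obtain ⟨x, hx, hx0⟩ := Submodule.ne_bot_iff _ |>.1 h
  obtain ⟨⟨a, ha, rfl⟩, hxS⟩ := Submodule.mem_inf.1 hx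
  exact ⟨a, ha, right_ne_zero_of_mul hx0, hxS⟩

theorem card_filter_mul_mem_eq [Fintype K] (S : Set K) {a : K} (ha : a ≠ 0) :
    #{b | b * a ∈ S} = Nat.card S := by
  rw [← Fintype.card_subtype, ← Nat.card_eq_fintype_card]
  exact Nat.card_preimage_of_injective (mul_left_injective₀ ha)
    fun x _ => ⟨x / a, div_mul_cancel₀ x ha⟩

theorem Submodule.card_sub_one_le_card_filter_mul_mem [Fintype F] [Fintype K]
    {A S : Submodule F K} {b a₀ : K} (ha₀ : a₀ ∈ A) (ha₀0 : a₀ ≠ 0) (hba₀ : b * a₀ ∈ S) :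
    Fintype.card F - 1 ≤ #{a | a ∈ A ∧ a ≠ 0 ∧ b * a ∈ S} := by
  rw [← card_univ, ← card_erase_of_mem (mem_univ 0)]
  refine card_le_card_of_injOn (· • a₀) (fun c hc => ?_) (smul_left_injective F ha₀0).injOn
  have hc0 : c ≠ 0 := ne_of_mem_erase hc
  simp only [coe_filter, mem_univ, true_and]
  exact ⟨A.smul_mem c ha₀, smul_ne_zero hc0 ha₀0, by rw [mul_smul_comm]; exact S.smul_mem c hba₀⟩

theorem Submodule.natCard_map_mulLeft_inf_ne_bot_mul_le [Fintype F] [Fintype K]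
    (A S : Submodule F K) :
    Nat.card {b : K // A.map (LinearMap.mulLeft F b) ⊓ S ≠ ⊥} * (Fintype.card F - 1) ≤
      (Nat.card A - 1) * Nat.card S := by
  have hA : Nat.card A - 1 = #{a | a ∈ A ∧ a ≠ 0} := by
    have hfilter : ({a | a ∈ A ∧ a ≠ 0} : Finset K) = ({a | a ∈ A} : Finset K).erase 0 := by
      ext; simp [and_comm]
    rw [hfilter, card_erase_of_mem (by simp), Nat.card_eq_fintype_card, Fintype.card_subtype]
  rw [Nat.card_eq_fintype_card, Fintype.card_subtype, hA]
  refine card_mul_le_card_mul (fun b a => b * a ∈ S) (fun b hb => ?_) (fun a ha => ?_)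
  · obtain ⟨a₀, ha₀, ha₀0, hba₀⟩ :=
      exists_ne_zero_mul_mem_of_map_mulLeft_inf_ne_bot (mem_filter.1 hb).2
    simpa only [bipartiteAbove, filter_filter, and_assoc] using
      card_sub_one_le_card_filter_mul_mem ha₀ ha₀0 hba₀
  · calc #(bipartiteBelow _ _ a) ≤ #{b | b * a ∈ S} :=
          card_le_card (filter_subset_filter _ (subset_univ _))
      _ = Nat.card S := card_filter_mul_mem_eq S (mem_filter.1 ha).2.2

end Multipliers

theorem count_bad_multipliers_general
    (q m α D : ℕ) (hm : 0 < m)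
    (Fq K : Type) [Field Fq] [Fintype Fq] [Field K] [Algebra Fq K]
    (hq : Fintype.card Fq = q) (hK : Module.finrank Fq K = m)
    (A B' : Submodule Fq K)
    (hA : Module.finrank Fq ↥A = α)
    (hD : Module.finrank Fq ↥(A * B') = D) :
    (Nat.card {b : K // A.map (LinearMap.mulLeft Fq b) ⊓ (A * B') ≠ ⊥} : ℚ) ≤
      (((q : ℚ) ^ α - 1) / ((q : ℚ) - 1)) * (q : ℚ) ^ D := by
  have : Module.Finite Fq K := Module.finite_of_finrank_pos (hK ▸ hm)
  have : Finite K := Module.finite_of_finite Fq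
  let : Fintype K := Fintype.ofFinite K
  have hcard : ∀ V : Submodule Fq K, Nat.card V = q ^ Module.finrank Fq V := fun V => by
    rw [Module.natCard_eq_pow_finrank (K := Fq), Nat.card_eq_fintype_card, hq]
  have key := A.natCard_map_mulLeft_inf_ne_bot_mul_le (A * B')
  rw [hcard, hcard, hA, hD, hq] at key
  have hq1 : 1 < q := hq ▸ Fintype.one_lt_card
  have hqα : 1 ≤ q ^ α := Nat.one_le_pow _ _ (by omega)
  rw [div_mul_eq_mul_div, le_div_iff₀ (by simpa using hq1)]
  have hkey := (Nat.cast_le (α := ℚ)).2 key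
  push_cast [Nat.cast_sub hq1.le, Nat.cast_sub hqα] at hkey
  exact hkey

/-- Let `A` be a `GF(q)`-subspace of `GF(q^m)` of dimension `α ≥ 1` and `B'` a
`GF(q)`-subspace such that the product space `⟨AB'⟩` has dimension `D`. Then the number of
elements `b ∈ GF(q^m)` such that the subspace `Ab = {ab : a ∈ A}` has a nonzero intersection
with `⟨AB'⟩` is at most `((q^α - 1)/(q - 1)) · q^D`. -/
theorem count_bad_multipliers
    (q m α D : ℕ) (hm : 0 < m)
    (Fq K : Type) [Field Fq] [Fintype Fq] [Field K] [Algebra Fq K]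
    (hq : Fintype.card Fq = q) (hK : Module.finrank Fq K = m)
    (A B' : Submodule Fq K)
    (hA : Module.finrank Fq ↥A = α) (hα : 1 ≤ α)
    (hD : Module.finrank Fq ↥(A * B') = D) :
    (Nat.card {b : K // A.map (LinearMap.mulLeft Fq b) ⊓ (A * B') ≠ ⊥} : ℚ) ≤
      (((q : ℚ) ^ α - 1) / ((q : ℚ) - 1)) * (q : ℚ) ^ D :=
  count_bad_multipliers_general q m α D hm Fq K hq hK A B' hA hD
end

section
/- Let A be a GF(q)-subspace of GF(q^m) of dimension α and let T be a GF(q)-subspace of dimension t (possibly t = 0) such that dim⟨AT⟩ = α·t. Let β be a nonnegative integer with α(t + β) ≤ m. Then the number of β-tuples (b₁, …, b_β) ∈ (GF(q^m))^β such that, setting B = T + span_{GF(q)}{b₁, …, b_β}, one has dim⟨AB⟩ < α(t + β), is at most q^{mβ} · (1/(q-1)) · (q^{α(t+β)-m} − q^{αt−m}). -/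
/-!
Write `W_x = {a ∈ A | a x ∈ ⟨AB⟩}`. Since `⟨A(B + Fx)⟩ = ⟨AB⟩ + Ax` and `⟨AB⟩ ∩ Ax = W_x x`,
adjoining `x` to `B` raises `dim ⟨AB⟩` by exactly `α - dim W_x`. Counting the pairs `(a, x)`
with `a ∈ A \ {0}` and `a x ∈ ⟨AB⟩` gives `∑_x (q ^ dim W_x - 1) = (q ^ α - 1) q ^ dim ⟨AB⟩`.
Now induct on `β`, splitting on the first vector `x = b₁`: if `W_x = 0` the product is still
of full dimension and the induction hypothesis applies to `B + Fx`; otherwise bound the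
remaining tuples by `q ^ (m (β - 1))` and charge them to `q ^ dim W_x - 1 ≥ q - 1`.
-/

open Module Submodule Finset

lemma Submodule.mul_span_singleton_eq_map_mulRight {R S : Type*} [CommSemiring R] [Semiring S]
    [Algebra R S] (P : Submodule R S) (x : S) :
    P * span R {x} = P.map (LinearMap.mulRight R x) := by
  ext y
  simp [mem_mul_span_singleton]

lemma Finset.sum_card_filter_mul_mem {G : Type*} [GroupWithZero G] [Fintype G] [DecidableEq G]
    (s t : Finset G) (hs : (0 : G) ∉ s) :
    ∑ x, #{a ∈ s | a * x ∈ t} = #s * #t := by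
  simp_rw [card_filter]
  rw [sum_comm, ← smul_eq_mul, ← sum_const]
  refine sum_congr rfl fun a ha => ?_
  exact (Equiv.sum_comp (Equiv.mulLeft₀ a (ne_of_mem_of_not_mem ha hs))
    fun y => if y ∈ t then 1 else 0).trans (by simp)

lemma Nat.card_fin_succ_subtype_eq_sum {α : Type*} [Fintype α] {n : ℕ}
    (Q : (Fin (n + 1) → α) → Prop) :
    Nat.card {b : Fin (n + 1) → α // Q b} =
      ∑ x : α, Nat.card {r : Fin n → α // Q (Fin.cons x r)} := by
  rw [← Nat.card_sigma]
  exact Nat.card_congr (((Fin.consEquiv fun _ => α).subtypeEquiv fun _ => Iff.rfl).symm.trans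
    (Equiv.subtypeProdEquivSigmaSubtype fun x r => Q (Fin.cons x r)))

lemma Submodule.card_filter_mem {F V : Type*} [Field F] [Fintype F] [AddCommGroup V] [Module F V]
    [Fintype V] (W : Submodule F V) [DecidablePred (· ∈ W)] :
    #{y | y ∈ W} = Fintype.card F ^ finrank F ↥W := by
  rw [← Fintype.card_subtype, ← Nat.card_eq_fintype_card, natCard_eq_pow_finrank (K := F),
    Nat.card_eq_fintype_card]

namespace Submodule

variable {F K : Type*} [Field F] [Field K] [Algebra F K]

def mulInto (A P : Submodule F K) (x : K) : Submodule F K :=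
  A ⊓ P.comap (LinearMap.mulRight F x)

lemma finrank_mul_sup_span_singleton_add_finrank_mulInto [FiniteDimensional F K]
    (A B : Submodule F K) (x : K) :
    finrank F ↥(A * (B ⊔ span F {x})) + finrank F ↥(A.mulInto (A * B) x) =
      finrank F ↥(A * B) + finrank F ↥A := by
  rcases eq_or_ne x 0 with rfl | hx
  · rw [mulInto, LinearMap.mulRight_zero_eq_zero, comap_zero, inf_top_eq, span_zero_singleton,
      sup_bot_eq, add_comm]
  have hinj : Function.Injective (LinearMap.mulRight F x) := mul_left_injective₀ hx
  have h := finrank_sup_add_finrank_inf_eq (A * B) (A.map (LinearMap.mulRight F x))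
  rwa [inf_comm, map_inf_eq_map_inf_comap, (equivMapOfInjective _ hinj _).finrank_eq.symm,
    (equivMapOfInjective _ hinj _).finrank_eq.symm, ← mul_span_singleton_eq_map_mulRight,
    ← Submodule.mul_sup] at h

noncomputable def deficientCount (A B : Submodule F K) (k n : ℕ) : ℕ :=
  Nat.card {b : Fin n → K // finrank F ↥(A * (B ⊔ span F (Set.range b))) < k}

lemma deficientCount_zero_self (A B : Submodule F K) :
    deficientCount A B (finrank F ↥(A * B)) 0 = 0 := by
  have : IsEmpty {b : Fin 0 → K //
      finrank F ↥(A * (B ⊔ span F (Set.range b))) < finrank F ↥(A * B)} :=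
    ⟨fun ⟨b, hb⟩ => by
      rw [Set.range_eq_empty, span_empty, sup_bot_eq] at hb
      exact lt_irrefl _ hb⟩
  exact Nat.card_of_isEmpty

variable [Fintype K]

lemma deficientCount_succ (A B : Submodule F K) (k n : ℕ) :
    deficientCount A B k (n + 1) = ∑ x : K, deficientCount A (B ⊔ span F {x}) k n := by
  rw [deficientCount, Nat.card_fin_succ_subtype_eq_sum]
  refine sum_congr rfl fun x _ => Nat.card_congr (Equiv.subtypeEquivRight fun r => ?_)
  rw [Fin.range_cons, span_insert, sup_assoc]

lemma deficientCount_le_card_pow (A B : Submodule F K) (k n : ℕ) :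
    deficientCount A B k n ≤ Fintype.card K ^ n := by
  rw [deficientCount]
  simpa [Nat.card_eq_fintype_card] using Finite.card_subtype_le
    fun b : Fin n → K => finrank F ↥(A * (B ⊔ span F (Set.range b))) < k

variable [Fintype F]

lemma sum_pow_finrank_mulInto (A P : Submodule F K) :
    ∑ x : K, ((Fintype.card F : ℚ) ^ finrank F ↥(A.mulInto P x) - 1) =
      ((Fintype.card F : ℚ) ^ finrank F ↥A - 1) * Fintype.card F ^ finrank F ↥P := by
  classical
  have hfiber : ∀ x,
      #{a ∈ ({y | y ∈ A} : Finset K).erase 0 | a * x ∈ ({y | y ∈ P} : Finset K)} =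
        #(({y | y ∈ A.mulInto P x} : Finset K).erase 0) := fun x => by
    congr 1
    ext a
    simp only [mem_filter, mem_erase, mem_univ, true_and, mulInto, mem_inf, mem_comap]
    tauto
  have herase : ∀ W : Submodule F K,
      (#(({y | y ∈ W} : Finset K).erase 0) : ℚ) = (Fintype.card F : ℚ) ^ finrank F ↥W - 1 :=
    fun W => by
      rw [cast_card_erase_of_mem (by simp), card_filter_mem, Nat.cast_pow]
  have key := congrArg (Nat.cast : ℕ → ℚ) <|
    sum_card_filter_mul_mem _ ({y | y ∈ P} : Finset K) (notMem_erase 0 ({y | y ∈ A} : Finset K))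
  push_cast [hfiber, herase, card_filter_mem] at key
  exact key

lemma card_mul_deficientCount_le_pow_sub_one (A B : Submodule F K) (k n : ℕ) {r : ℕ}
    (hr : 0 < r) :
    ((Fintype.card F : ℚ) - 1) * Fintype.card K * deficientCount A B k n ≤
      (Fintype.card K : ℚ) ^ (n + 1) * ((Fintype.card F : ℚ) ^ r - 1) := by
  have hq : (1 : ℚ) ≤ Fintype.card F := Nat.one_le_cast.mpr Fintype.card_pos
  have hN : (deficientCount A B k n : ℚ) ≤ (Fintype.card K : ℚ) ^ n := by
    exact_mod_cast deficientCount_le_card_pow A B k n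
  calc ((Fintype.card F : ℚ) - 1) * Fintype.card K * deficientCount A B k n
      ≤ ((Fintype.card F : ℚ) - 1) * Fintype.card K * (Fintype.card K : ℚ) ^ n := by gcongr
    _ = (Fintype.card K : ℚ) ^ (n + 1) * ((Fintype.card F : ℚ) - 1) := by ring
    _ ≤ (Fintype.card K : ℚ) ^ (n + 1) * ((Fintype.card F : ℚ) ^ r - 1) := by
      gcongr
      exact le_self_pow₀ hq hr.ne'

theorem card_mul_deficientCount_le (A B : Submodule F K) (n : ℕ) :
    ((Fintype.card F : ℚ) - 1) * Fintype.card K *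
        deficientCount A B (finrank F ↥(A * B) + finrank F ↥A * n) n ≤
      (Fintype.card K : ℚ) ^ n *
        ((Fintype.card F : ℚ) ^ (finrank F ↥(A * B) + finrank F ↥A * n) -
          (Fintype.card F : ℚ) ^ finrank F ↥(A * B)) := by
  induction n generalizing B with
  | zero => simp [deficientCount_zero_self]
  | succ n ih =>
    set q : ℚ := (Fintype.card F : ℚ)
    set c : ℚ := (Fintype.card K : ℚ)
    set α := finrank F ↥A
    set d := finrank F ↥(A * B)
    have hq : 1 ≤ q := Nat.one_le_cast.mpr Fintype.card_pos
    have hc : 0 ≤ c := Nat.cast_nonneg _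
    have pointwise : ∀ x : K,
        (q - 1) * c * deficientCount A (B ⊔ span F {x}) (d + α * (n + 1)) n ≤
        c ^ (n + 1) * (q ^ finrank F ↥(A.mulInto (A * B) x) - 1) +
          c ^ n * (q ^ (d + α * (n + 1)) - q ^ (d + α)) := by
      intro x
      have hrank := finrank_mul_sup_span_singleton_add_finrank_mulInto A B x
      rcases Nat.eq_zero_or_pos (finrank F ↥(A.mulInto (A * B) x)) with hw | hw
      · have hdx : finrank F ↥(A * (B ⊔ span F {x})) = d + α := by omega
        have hih := ih (B ⊔ span F {x})
        rw [hdx, show d + α + α * n = d + α * (n + 1) by ring] at hih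
        simpa [hw] using hih
      · have hexp : q ^ (d + α) ≤ q ^ (d + α * (n + 1)) :=
          pow_le_pow_right₀ hq (by nlinarith)
        exact le_add_of_le_of_nonneg (card_mul_deficientCount_le_pow_sub_one _ _ _ _ hw)
          (mul_nonneg (pow_nonneg hc n) (by linarith))
    calc (q - 1) * c * (deficientCount A B (d + α * (n + 1)) (n + 1) : ℚ)
        ≤ ∑ x : K, (c ^ (n + 1) * (q ^ finrank F ↥(A.mulInto (A * B) x) - 1) +
          c ^ n * (q ^ (d + α * (n + 1)) - q ^ (d + α))) := by
          rw [deficientCount_succ]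
          push_cast
          rw [mul_sum]
          exact sum_le_sum fun x _ => pointwise x
      _ = c ^ (n + 1) * ((q ^ α - 1) * q ^ d) +
            c * (c ^ n * (q ^ (d + α * (n + 1)) - q ^ (d + α))) := by
          rw [sum_add_distrib, ← mul_sum, sum_pow_finrank_mulInto, sum_const, card_univ,
            nsmul_eq_mul]
      _ = c ^ (n + 1) * (q ^ (d + α * (n + 1)) - q ^ d) := by ring

end Submodule

theorem count_non_full_product_tuples_sharp_general
    (q m α t β : ℕ) (hm : 0 < m)
    (Fq K : Type) [Field Fq] [Fintype Fq] [Field K] [Algebra Fq K]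
    (hq : Fintype.card Fq = q) (hK : Module.finrank Fq K = m)
    (A T : Submodule Fq K)
    (hA : Module.finrank Fq ↥A = α)
    (hAT : Module.finrank Fq ↥(A * T) = α * t) :
    (Nat.card {b : Fin β → K //
        Module.finrank Fq ↥(A * (T ⊔ Submodule.span Fq (Set.range b))) < α * (t + β)} : ℚ) ≤
      (q : ℚ) ^ (m * β) * (1 / ((q : ℚ) - 1)) *
        ((q : ℚ) ^ ((α * (t + β) : ℤ) - (m : ℤ)) - (q : ℚ) ^ ((α * t : ℤ) - (m : ℤ))) := by
  have : FiniteDimensional Fq K := Module.finite_of_finrank_pos (hK ▸ hm)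
  have : Finite K := Module.finite_of_finite Fq
  have : Fintype K := Fintype.ofFinite K
  have hcard : Fintype.card K = q ^ m := by rw [card_eq_pow_finrank (K := Fq), hK, hq]
  have hcount := card_mul_deficientCount_le A T β
  rw [hAT, hA, hq, hcard, ← mul_add] at hcount
  have hq1 : (1 : ℚ) < q := by exact_mod_cast hq ▸ Fintype.one_lt_card
  change (deficientCount A T (α * (t + β)) β : ℚ) ≤ _
  have hq0 : (0 : ℚ) < q := by linarith
  rw [zpow_sub₀ hq0.ne', zpow_sub₀ hq0.ne']
  simp only [← Nat.cast_add, ← Nat.cast_mul, zpow_natCast]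
  push_cast at hcount
  rw [pow_mul, ← sub_div, mul_assoc, one_div_mul_eq_div, div_div, mul_div_assoc',
    le_div_iff₀ (mul_pos (pow_pos hq0 m) (sub_pos.2 hq1))]
  linarith

/-- sharper counting form of Lemma 2: Let `A` be a `GF(q)`-subspace of `GF(q^m)`
of dimension `α` and `T` a subspace of dimension `t` (possibly `t = 0`) with `dim⟨AT⟩ = α·t`.
Let `β ≥ 0` with `α(t+β) ≤ m`. Then the number of `β`-tuples `(b₁, …, b_β)` such that, setting
`B = T + span{b₁, …, b_β}`, one has `dim⟨AB⟩ < α(t+β)`, is at most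
`q^{mβ} · (1/(q-1)) · (q^{α(t+β)-m} − q^{αt-m})` (integer exponents, possibly negative). -/
theorem count_non_full_product_tuples_sharp
    (q m α t β : ℕ) (hm : 0 < m)
    (Fq K : Type) [Field Fq] [Fintype Fq] [Field K] [Algebra Fq K]
    (hq : Fintype.card Fq = q) (hK : Module.finrank Fq K = m)
    (A T : Submodule Fq K)
    (hA : Module.finrank Fq ↥A = α) (hT : Module.finrank Fq ↥T = t)
    (hAT : Module.finrank Fq ↥(A * T) = α * t)
    (hβ : α * (t + β) ≤ m) :
    (Nat.card {b : Fin β → K //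
        Module.finrank Fq ↥(A * (T ⊔ Submodule.span Fq (Set.range b))) < α * (t + β)} : ℚ) ≤
      (q : ℚ) ^ (m * β) * (1 / ((q : ℚ) - 1)) *
        ((q : ℚ) ^ ((α * (t + β) : ℤ) - (m : ℤ)) - (q : ℚ) ^ ((α * t : ℤ) - (m : ℤ))) :=
  count_non_full_product_tuples_sharp_general q m α t β hm Fq K hq hK A T hA hAT
end

section
/- Let F be a GF(q)-subspace of GF(q^m) of dimension d, let F₁, F₂ be nonzero elements of F with dim(F₁⁻¹F + F₂⁻¹F) = 2d - 1, and let E be a GF(q)-subspace of GF(q^m) of dimension r such that dim⟨(F₁⁻¹F + F₂⁻¹F)E⟩ = (2d - 1)·r. Then dim⟨FE⟩ = d·r and F₁⁻¹⟨FE⟩ ∩ F₂⁻¹⟨FE⟩ = E. -/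
/-!
Put `Sᵢ = Fᵢ⁻¹F`, so that `1 ∈ Sᵢ` and `FE` is carried onto `SᵢE` by multiplication by `Fᵢ⁻¹`.
Then `E ≤ S₁E ⊓ S₂E` and `dim SᵢE ≤ dr`, while `S₁E + S₂E = (S₁ + S₂)E` has dimension
`(2d - 1)r`. The dimension formula for `S₁E + S₂E` leaves room for neither a defect in
`dim S₁E` nor an excess of `S₁E ⊓ S₂E` over `E`.
-/

open Module Submodule

namespace Submodule

section LinearAlgebra

variable {K V : Type*} [DivisionRing K] [AddCommGroup V] [Module K V] [FiniteDimensional K V]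

theorem finrank_eq_and_inf_eq_of_two_mul_le {E P Q : Submodule K V} {n : ℕ}
    (hEP : E ≤ P) (hEQ : E ≤ Q) (hP : finrank K P ≤ n) (hQ : finrank K Q ≤ n)
    (hsup : 2 * n ≤ finrank K ↥(P ⊔ Q) + finrank K E) :
    finrank K P = n ∧ P ⊓ Q = E := by
  have hE : E ≤ P ⊓ Q := le_inf hEP hEQ
  have hdim := finrank_sup_add_finrank_inf_eq P Q
  have hEinf := finrank_mono hE
  exact ⟨by omega, (eq_of_le_of_finrank_eq hE (by omega)).symm⟩

end LinearAlgebra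

section Algebra

variable {R A : Type*} [CommSemiring R] [Semiring A] [Algebra R A]

theorem map_mulLeft_eq_span_singleton_mul (c : A) (S : Submodule R A) :
    S.map (LinearMap.mulLeft R c) = span R {c} * S :=
  span_singleton_mul.symm

theorem map_mulLeft_mul (c : A) (S T : Submodule R A) :
    S.map (LinearMap.mulLeft R c) * T = (S * T).map (LinearMap.mulLeft R c) := by
  simp only [map_mulLeft_eq_span_singleton_mul, mul_assoc]

theorem finrank_map_mulLeft {c : A} (hc : IsLeftRegular c) (S : Submodule R A) :
    finrank R ↥(S.map (LinearMap.mulLeft R c)) = finrank R S :=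
  (equivMapOfInjective _ hc S).finrank_eq.symm

theorem le_mul_of_one_mem {S : Submodule R A} (h : (1 : A) ∈ S) (T : Submodule R A) :
    T ≤ S * T :=
  le_mul_of_one_le_left' (one_le.mpr h)

end Algebra

section FiniteDimensional

variable {R A : Type*} [Field R] [Ring A] [Algebra R A]

theorem finrank_mul_le (S T : Submodule R A) [FiniteDimensional R S] [FiniteDimensional R T] :
    finrank R ↥(S * T) ≤ finrank R S * finrank R T := by
  rw [← mulMap_range, ← finrank_tensorProduct]
  exact LinearMap.finrank_range_le _

theorem finrank_mul_eq_and_mul_inf_mul_eq [FiniteDimensional R A] {S₁ S₂ E : Submodule R A}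
    {d : ℕ} (h₁ : (1 : A) ∈ S₁) (h₂ : (1 : A) ∈ S₂)
    (hd₁ : finrank R S₁ ≤ d) (hd₂ : finrank R S₂ ≤ d)
    (hprod : (2 * d - 1) * finrank R E ≤ finrank R ↥((S₁ ⊔ S₂) * E)) :
    finrank R ↥(S₁ * E) = d * finrank R E ∧ S₁ * E ⊓ S₂ * E = E := by
  have hle {S : Submodule R A} (hS : finrank R S ≤ d) :
      finrank R ↥(S * E) ≤ d * finrank R E :=
    (finrank_mul_le S E).trans (Nat.mul_le_mul_right _ hS)
  refine finrank_eq_and_inf_eq_of_two_mul_le (le_mul_of_one_mem h₁ E) (le_mul_of_one_mem h₂ E)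
    (hle hd₁) (hle hd₂) ?_
  rw [← sup_mul]
  calc 2 * (d * finrank R E) ≤ (2 * d - 1 + 1) * finrank R E := by
        rw [← mul_assoc]; exact Nat.mul_le_mul_right _ (by omega)
    _ ≤ finrank R ↥((S₁ ⊔ S₂) * E) + finrank R E := by rw [add_one_mul]; omega

end FiniteDimensional

end Submodule

theorem product_space_full_dim_and_intersection_general
    (m d r : ℕ) (hm : 0 < m)
    (Fq K : Type) [Field Fq] [Field K] [Algebra Fq K]
    (hK : Module.finrank Fq K = m)
    (Fsp E : Submodule Fq K)
    (hF : Module.finrank Fq ↥Fsp = d)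
    (F₁ F₂ : K) (hF₁ : F₁ ∈ Fsp) (hF₂ : F₂ ∈ Fsp) (h₁ : F₁ ≠ 0) (h₂ : F₂ ≠ 0)
    (hE : Module.finrank Fq ↥E = r)
    (hprod : Module.finrank Fq ↥((Fsp.map (LinearMap.mulLeft Fq F₁⁻¹) ⊔
      Fsp.map (LinearMap.mulLeft Fq F₂⁻¹)) * E) = (2 * d - 1) * r) :
    Module.finrank Fq ↥(Fsp * E) = d * r ∧
      (Fsp * E).map (LinearMap.mulLeft Fq F₁⁻¹) ⊓
        (Fsp * E).map (LinearMap.mulLeft Fq F₂⁻¹) = E := by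
  have : FiniteDimensional Fq K := FiniteDimensional.of_finrank_pos (hK ▸ hm)
  have one_mem {c : K} (hc : c ∈ Fsp) (hc₀ : c ≠ 0) :
      (1 : K) ∈ Fsp.map (LinearMap.mulLeft Fq c⁻¹) :=
    ⟨c, hc, inv_mul_cancel₀ hc₀⟩
  have regular {c : K} (hc₀ : c ≠ 0) : IsLeftRegular c⁻¹ :=
    (IsRegular.of_ne_zero (inv_ne_zero hc₀)).left
  have finrank_le {c : K} (hc₀ : c ≠ 0) :
      finrank Fq ↥(Fsp.map (LinearMap.mulLeft Fq c⁻¹)) ≤ d :=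
    (finrank_map_mulLeft (regular hc₀) Fsp).trans_le hF.le
  obtain ⟨hdim, hinf⟩ := finrank_mul_eq_and_mul_inf_mul_eq (one_mem hF₁ h₁) (one_mem hF₂ h₂)
    (finrank_le h₁) (finrank_le h₂) (hE ▸ hprod.ge)
  rw [map_mulLeft_mul, finrank_map_mulLeft (regular h₁), hE] at hdim
  rw [map_mulLeft_mul, map_mulLeft_mul] at hinf
  exact ⟨hdim, hinf⟩

/-- Let `F` be a `GF(q)`-subspace of `GF(q^m)` of dimension `d`, `F₁, F₂` nonzero
elements of `F` with `dim(F₁⁻¹F + F₂⁻¹F) = 2d - 1`, and `E` a subspace of dimension `r` with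
`dim⟨(F₁⁻¹F + F₂⁻¹F)E⟩ = (2d-1)·r`. Then `dim⟨FE⟩ = d·r` and
`F₁⁻¹⟨FE⟩ ∩ F₂⁻¹⟨FE⟩ = E`. -/
theorem product_space_full_dim_and_intersection
    (q m d r : ℕ) (hm : 0 < m)
    (Fq K : Type) [Field Fq] [Fintype Fq] [Field K] [Algebra Fq K]
    (hq : Fintype.card Fq = q) (hK : Module.finrank Fq K = m)
    (Fsp E : Submodule Fq K)
    (hF : Module.finrank Fq ↥Fsp = d)
    (F₁ F₂ : K) (hF₁ : F₁ ∈ Fsp) (hF₂ : F₂ ∈ Fsp) (h₁ : F₁ ≠ 0) (h₂ : F₂ ≠ 0)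
    (h2d1 : Module.finrank Fq ↥(Fsp.map (LinearMap.mulLeft Fq F₁⁻¹) ⊔
      Fsp.map (LinearMap.mulLeft Fq F₂⁻¹)) = 2 * d - 1)
    (hE : Module.finrank Fq ↥E = r)
    (hprod : Module.finrank Fq ↥((Fsp.map (LinearMap.mulLeft Fq F₁⁻¹) ⊔
      Fsp.map (LinearMap.mulLeft Fq F₂⁻¹)) * E) = (2 * d - 1) * r) :
    Module.finrank Fq ↥(Fsp * E) = d * r ∧
      (Fsp * E).map (LinearMap.mulLeft Fq F₁⁻¹) ⊓
        (Fsp * E).map (LinearMap.mulLeft Fq F₂⁻¹) = E :=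
  product_space_full_dim_and_intersection_general m d r hm Fq K hK Fsp E hF F₁ F₂ hF₁ hF₂ h₁ h₂ hE
    hprod
end
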